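/- Let φ = Σ_{i=0}^4 b_{i,4-i}x^i y^{4-i}/(i!(4-i)!) be a binary quartic and define J₀^φ = φ, J₂^φ = φ_xx φ_yy − φ_xy², J₃^φ = −(φ_y ∂_x(J₂^φ) − φ_x ∂_y(J₂^φ)). Then 9(J₃^φ)² + 16(J₂^φ)³ + 144α(J₀^φ)²J₂^φ + 864δ(J₀^φ)³ = 0 as polynomials in x, y and the coefficients, where α = 4b₁₃b₃₁ − b₄₀b₀₄ − 3b₂₂² and δ = b₂₂b₄₀b₀₄ − b₀₄b₃₁² − b₄₀b₁₃² + 2b₁₃b₂₂b₃₁ − b₂₂³. -/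

import Mathlib

/-!
Write the quartic with monomial coefficients, `φ = quartic a₀ a₁ a₂ a₃ a₄`, so that the paper's
divided-power coefficients are `(b₄₀, b₃₁, b₂₂, b₁₃, b₀₄) = (24a₀, 6a₁, 4a₂, 6a₃, 24a₄)`.
Differentiating term by term, the partial derivatives of `φ` are explicit cubics and quadratics,
the Hessian `J₂` is again a quartic whose coefficients are quadratic in the `aᵢ`, and
`J₃ = φ_x ∂_y J₂ - φ_y ∂_x J₂` is an explicit sextic. The syzygy then becomes a polynomial
identity in `x, y, a₀, …, a₄` with integer coefficients, which holds over every commutative ring.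
-/

open MvPolynomial

namespace BinaryForm

variable {R : Type*} [CommRing R]

noncomputable def quadratic (c0 c1 c2 : R) : MvPolynomial (Fin 2) R :=
  C c0 * X 0 ^ 2 + C c1 * X 0 * X 1 + C c2 * X 1 ^ 2

noncomputable def cubic (c0 c1 c2 c3 : R) : MvPolynomial (Fin 2) R :=
  C c0 * X 0 ^ 3 + C c1 * X 0 ^ 2 * X 1 + C c2 * X 0 * X 1 ^ 2 + C c3 * X 1 ^ 3

noncomputable def quartic (c0 c1 c2 c3 c4 : R) : MvPolynomial (Fin 2) R :=
  C c0 * X 0 ^ 4 + C c1 * X 0 ^ 3 * X 1 + C c2 * X 0 ^ 2 * X 1 ^ 2 + C c3 * X 0 * X 1 ^ 3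
    + C c4 * X 1 ^ 4

noncomputable def hessian (f : MvPolynomial (Fin 2) R) : MvPolynomial (Fin 2) R :=
  pderiv 0 (pderiv 0 f) * pderiv 1 (pderiv 1 f) - pderiv 1 (pderiv 0 f) ^ 2

noncomputable def jacobianHessian (f : MvPolynomial (Fin 2) R) : MvPolynomial (Fin 2) R :=
  -(pderiv 1 f * pderiv 0 (hessian f) - pderiv 0 f * pderiv 1 (hessian f))

def apolarInvariant (b40 b31 b22 b13 b04 : R) : R :=
  4 * b13 * b31 - b40 * b04 - 3 * b22 ^ 2

def hankelDet (b40 b31 b22 b13 b04 : R) : R :=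
  !![b40, b31, b22; b31, b22, b13; b22, b13, b04].det

lemma hankelDet_eq (b40 b31 b22 b13 b04 : R) :
    hankelDet b40 b31 b22 b13 b04 = b22 * b40 * b04 - b04 * b31 ^ 2 - b40 * b13 ^ 2
      + 2 * b13 * b22 * b31 - b22 ^ 3 := by
  rw [hankelDet, Matrix.det_fin_three]
  simp only [Matrix.of_apply, Matrix.cons_val', Matrix.cons_val_zero, Matrix.cons_val_fin_one,
    Matrix.cons_val_one, Matrix.cons_val]
  ring

lemma pderiv_zero_quartic (c0 c1 c2 c3 c4 : R) :
    pderiv 0 (quartic c0 c1 c2 c3 c4) = cubic (4 * c0) (3 * c1) (2 * c2) c3 := by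
  simp only [quartic, cubic, map_add, Derivation.leibniz, Derivation.leibniz_pow, pderiv_X,
    Pi.single_eq_same, Pi.single_eq_of_ne, ne_eq, one_ne_zero, not_false_eq_true,
    derivation_C, smul_eq_mul, nsmul_eq_mul, Nat.cast_ofNat, C_mul, map_ofNat]
  ring

lemma pderiv_one_quartic (c0 c1 c2 c3 c4 : R) :
    pderiv 1 (quartic c0 c1 c2 c3 c4) = cubic c1 (2 * c2) (3 * c3) (4 * c4) := by
  simp only [quartic, cubic, map_add, Derivation.leibniz, Derivation.leibniz_pow, pderiv_X,
    Pi.single_eq_same, Pi.single_eq_of_ne, ne_eq, zero_ne_one, not_false_eq_true,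
    derivation_C, smul_eq_mul, nsmul_eq_mul, Nat.cast_ofNat, C_mul, map_ofNat]
  ring

lemma pderiv_zero_cubic (c0 c1 c2 c3 : R) :
    pderiv 0 (cubic c0 c1 c2 c3) = quadratic (3 * c0) (2 * c1) c2 := by
  simp only [cubic, quadratic, map_add, Derivation.leibniz, Derivation.leibniz_pow, pderiv_X,
    Pi.single_eq_same, Pi.single_eq_of_ne, ne_eq, one_ne_zero, not_false_eq_true,
    derivation_C, smul_eq_mul, nsmul_eq_mul, Nat.cast_ofNat, C_mul, map_ofNat]
  ring

lemma pderiv_one_cubic (c0 c1 c2 c3 : R) :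
    pderiv 1 (cubic c0 c1 c2 c3) = quadratic c1 (2 * c2) (3 * c3) := by
  simp only [cubic, quadratic, map_add, Derivation.leibniz, Derivation.leibniz_pow, pderiv_X,
    Pi.single_eq_same, Pi.single_eq_of_ne, ne_eq, zero_ne_one, not_false_eq_true,
    derivation_C, smul_eq_mul, nsmul_eq_mul, Nat.cast_ofNat, C_mul, map_ofNat]
  ring

lemma hessian_quartic (a0 a1 a2 a3 a4 : R) :
    hessian (quartic a0 a1 a2 a3 a4) =
      quartic (24 * a0 * a2 - 9 * a1 ^ 2) (72 * a0 * a3 - 12 * a1 * a2)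
        (144 * a0 * a4 + 18 * a1 * a3 - 12 * a2 ^ 2) (72 * a1 * a4 - 12 * a2 * a3)
        (24 * a2 * a4 - 9 * a3 ^ 2) := by
  rw [hessian, pderiv_zero_quartic, pderiv_one_quartic, pderiv_zero_cubic, pderiv_one_cubic,
    pderiv_one_cubic]
  simp only [quadratic, quartic, map_mul, map_sub, map_add, map_pow, map_ofNat]
  ring

theorem syzygy_quartic (a0 a1 a2 a3 a4 : R) :
    let φ := quartic a0 a1 a2 a3 a4
    9 * jacobianHessian φ ^ 2 + 16 * hessian φ ^ 3
      + C (144 * apolarInvariant (24 * a0) (6 * a1) (4 * a2) (6 * a3) (24 * a4))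
        * φ ^ 2 * hessian φ
      + C (864 * hankelDet (24 * a0) (6 * a1) (4 * a2) (6 * a3) (24 * a4)) * φ ^ 3 = 0 := by
  dsimp only
  rw [jacobianHessian, hessian_quartic, pderiv_zero_quartic, pderiv_one_quartic,
    pderiv_zero_quartic, pderiv_one_quartic, hankelDet_eq]
  simp only [apolarInvariant, quartic, cubic, map_mul, map_sub, map_add, map_pow, map_ofNat]
  ring

end BinaryForm

/-- The syzygy 9(J₃^φ)² + 16(J₂^φ)³ + 144α(J₀^φ)²J₂^φ + 864δ(J₀^φ)³ = 0
for the binary quartic φ = Σ b_{i,4-i} xⁱy^{4-i}/(i!(4-i)!). -/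
theorem quartic_syzygy (b40 b31 b22 b13 b04 : ℂ) :
    let φ : MvPolynomial (Fin 2) ℂ :=
      C (b40 / 24) * X 0 ^ 4 + C (b31 / 6) * X 0 ^ 3 * X 1
        + C (b22 / 4) * X 0 ^ 2 * X 1 ^ 2 + C (b13 / 6) * X 0 * X 1 ^ 3
        + C (b04 / 24) * X 1 ^ 4
    let φx := pderiv 0 φ
    let φy := pderiv 1 φ
    let J0 := φ
    let J2 := pderiv 0 φx * pderiv 1 φy - (pderiv 1 φx) ^ 2
    let J3 := -(φy * pderiv 0 J2 - φx * pderiv 1 J2)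
    let α := 4 * b13 * b31 - b40 * b04 - 3 * b22 ^ 2
    let δ := b22 * b40 * b04 - b04 * b31 ^ 2 - b40 * b13 ^ 2
        + 2 * b13 * b22 * b31 - b22 ^ 3
    9 * J3 ^ 2 + 16 * J2 ^ 3 + C (144 * α) * J0 ^ 2 * J2 + C (864 * δ) * J0 ^ 3
      = 0 := by
  have key := BinaryForm.syzygy_quartic (b40 / 24) (b31 / 6) (b22 / 4) (b13 / 6) (b04 / 24)
  rw [show 24 * (b40 / 24) = b40 by ring, show 6 * (b31 / 6) = b31 by ring,
    show 4 * (b22 / 4) = b22 by ring, show 6 * (b13 / 6) = b13 by ring,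
    show 24 * (b04 / 24) = b04 by ring, BinaryForm.hankelDet_eq] at key
  exact key
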